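/- For every c > 0, σ > 0 and every positive integer n, the modulus of the n-th Benford–Fourier coefficient satisfies 0 < |a_n| ≤ (1 + (2πn/ln 10)²)^{−1/2} < 1. -/

import Mathlib

open Real MeasureTheory

/-- Scale parameter β of the generalized Gaussian density. -/
noncomputable def ggdBeta (c σ : ℝ) : ℝ :=
  (1 / σ) * Real.sqrt (Real.Gamma (3 / c) / Real.Gamma (1 / c))

/-- Normalizing constant A of the generalized Gaussian density. -/
noncomputable def ggdA (c σ : ℝ) : ℝ :=
  ggdBeta c σ * c / (2 * Real.Gamma (1 / c))

/-- The generalized Gaussian density with shape factor `c` and scale `σ`. -/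
noncomputable def ggdPdf (c σ : ℝ) (x : ℝ) : ℝ :=
  ggdA c σ * Real.exp (-|ggdBeta c σ * x| ^ c)

/-- The `n`-th Benford–Fourier coefficient of the generalized Gaussian density:
`a_n = ∫ P_{c,σ}(x) · exp(−2πi·n·log₁₀|x|) dx`. -/
noncomputable def bfCoeff (c σ : ℝ) (n : ℕ) : ℂ :=
  ∫ x : ℝ, (ggdPdf c σ x : ℂ) *
    Complex.exp (-((2 * π * n * Real.logb 10 |x| : ℝ) : ℂ) * Complex.I)

/-! Since the integrand is even, folding it onto `(0, ∞)` turns `a_n` into a Mellin transform of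
`exp (-(β x) ^ c)` at `1 - iτ`, `τ = 2πn / ln 10`, whence `a_n = β^{iτ} Γ((1 - iτ)/c) / Γ(1/c)`.
The triangle inequality in Euler's integral gives `|Γ(z + 1)| ≤ Γ(Re z + 1)`, i.e.
`|z| |Γ(z)| ≤ Re z · Γ(Re z)`; at `z = (1 - iτ)/c` this reads `|a_n| ≤ 1 / |1 - iτ|`.
Positivity holds because `Γ` has no zeros. -/

open Set

lemma volume_restrict_Iic_eq_map_neg :
    (volume : Measure ℝ).restrict (Iic 0) = ((volume : Measure ℝ).restrict (Ici 0)).map Neg.neg := by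
  conv_lhs => rw [← Measure.map_neg_eq_self (volume : Measure ℝ),
    measurableEmbedding_neg.restrict_map]
  simp only [neg_preimage, neg_Iic, neg_zero]

theorem integral_comp_abs_eq_two_smul {E : Type*} [NormedAddCommGroup E] [NormedSpace ℝ E]
    (f : ℝ → E) : ∫ x, f |x| = (2 : ℝ) • ∫ x in Ioi 0, f x := by
  have hIoi : ∫ x in Ioi 0, f |x| = ∫ x in Ioi 0, f x :=
    setIntegral_congr_fun measurableSet_Ioi fun x hx => by rw [abs_of_pos hx]
  have hIic_int :
      IntegrableOn (fun x => f |x|) (Iic 0) ↔ IntegrableOn (fun x => f |x|) (Ioi 0) := by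
    rw [IntegrableOn, volume_restrict_Iic_eq_map_neg, measurableEmbedding_neg.integrable_map_iff]
    simp only [Function.comp_def, abs_neg]
    exact integrableOn_Ici_iff_integrableOn_Ioi
  have hIic : ∫ x in Iic 0, f |x| = ∫ x in Ioi 0, f |x| := by
    rw [volume_restrict_Iic_eq_map_neg, measurableEmbedding_neg.integral_map]
    simp only [abs_neg]
    exact integral_Ici_eq_integral_Ioi
  have hsplit : (volume : Measure ℝ).restrict (Ioi 0) + volume.restrict (Iic 0) = volume := by
    rw [← compl_Ioi, Measure.restrict_add_restrict_compl measurableSet_Ioi]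
  by_cases hf : IntegrableOn (fun x => f |x|) (Ioi 0)
  · conv_lhs => rw [← hsplit]
    rw [integral_add_measure hf (hIic_int.mpr hf), hIic, hIoi, two_smul]
  · have hf' : ¬ Integrable (fun x => f |x|) := fun h => hf h.integrableOn
    rw [← hIoi, integral_undef hf, integral_undef hf', smul_zero]

theorem mellin_exp_neg_rpow {p : ℝ} (hp : 0 < p) {s : ℂ} (hs : 0 < s.re) :
    mellin (fun t : ℝ => (Real.exp (-t ^ p) : ℂ)) s = p⁻¹ * Complex.Gamma (s / p) := by
  have hsp : 0 < (s / p).re := by rw [Complex.div_ofReal_re]; positivity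
  rw [mellin_comp_rpow (fun t : ℝ => (Real.exp (-t) : ℂ)), ← Complex.GammaIntegral_eq_mellin,
    ← Complex.Gamma_eq_integral hsp, abs_of_pos hp, Complex.real_smul, Complex.ofReal_inv]

namespace Complex

theorem norm_Gamma_le_Gamma_re {s : ℂ} (hs : 0 < s.re) : ‖Gamma s‖ ≤ Real.Gamma s.re := by
  rw [Gamma_eq_integral hs, GammaIntegral, Real.Gamma_eq_integral hs]
  refine (norm_integral_le_integral_norm _).trans_eq <|
    setIntegral_congr_fun measurableSet_Ioi fun x hx => ?_
  simp [norm_cpow_eq_rpow_re_of_pos hx, norm_exp]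

theorem norm_mul_norm_Gamma_le {s : ℂ} (hs : 0 < s.re) :
    ‖s‖ * ‖Gamma s‖ ≤ s.re * Real.Gamma s.re :=
  calc ‖s‖ * ‖Gamma s‖ = ‖Gamma (s + 1)‖ := by
        rw [Gamma_add_one s (ne_zero_of_re_pos hs), norm_mul]
    _ ≤ Real.Gamma (s + 1).re := norm_Gamma_le_Gamma_re (by simp only [add_re, one_re]; linarith)
    _ = s.re * Real.Gamma s.re := by rw [add_re, one_re, Real.Gamma_add_one hs.ne']

theorem norm_Gamma_div_Gamma_re_le {s : ℂ} (hs : 0 < s.re) :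
    ‖Gamma s‖ / Real.Gamma s.re ≤ s.re / ‖s‖ := by
  rw [div_le_div_iff₀ (Real.Gamma_pos_of_pos hs) (norm_pos_iff.mpr (ne_zero_of_re_pos hs)),
    mul_comm]
  exact norm_mul_norm_Gamma_le hs

theorem ofReal_cpow_neg_mul_I {t : ℝ} (ht : 0 < t) (τ : ℝ) :
    (t : ℂ) ^ (-((τ : ℂ) * I)) = exp (-((τ * Real.log t : ℝ) : ℂ) * I) := by
  rw [cpow_def_of_ne_zero (ofReal_ne_zero.mpr ht.ne'), ← ofReal_log ht.le]
  push_cast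
  ring_nf

theorem re_one_sub_mul_I_div (τ c : ℝ) : ((1 - τ * I) / c).re = 1 / c := by
  simp [div_ofReal_re]

theorem norm_one_sub_mul_I (τ : ℝ) : ‖1 - τ * I‖ = √(1 + τ ^ 2) := by
  rw [show (1 : ℂ) - τ * I = (1 : ℝ) + (-τ : ℝ) * I by push_cast; ring, norm_add_mul_I, one_pow,
    neg_sq]

theorem norm_Gamma_one_sub_mul_I_div_le {c : ℝ} (hc : 0 < c) (τ : ℝ) :
    ‖Gamma ((1 - τ * I) / c)‖ / Real.Gamma (1 / c) ≤ √((1 + τ ^ 2)⁻¹) := by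
  set s : ℂ := (1 - τ * I) / c
  have hs_re : s.re = 1 / c := re_one_sub_mul_I_div τ c
  have hs_norm : ‖s‖ = √(1 + τ ^ 2) / c := by
    rw [norm_div, norm_one_sub_mul_I, norm_real, Real.norm_of_nonneg hc.le]
  calc ‖Gamma s‖ / Real.Gamma (1 / c) = ‖Gamma s‖ / Real.Gamma s.re := by rw [hs_re]
    _ ≤ s.re / ‖s‖ := norm_Gamma_div_Gamma_re_le (by rw [hs_re]; positivity)
    _ = √((1 + τ ^ 2)⁻¹) := by
        rw [hs_re, hs_norm, Real.sqrt_inv]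
        field_simp

end Complex

lemma ggdBeta_pos {c σ : ℝ} (hc : 0 < c) (hσ : 0 < σ) : 0 < ggdBeta c σ := by
  have hΓ1 := Real.Gamma_pos_of_pos (one_div_pos.mpr hc)
  have hΓ3 := Real.Gamma_pos_of_pos (div_pos three_pos hc)
  unfold ggdBeta
  positivity

lemma ggdPdf_abs (c σ x : ℝ) : ggdPdf c σ |x| = ggdPdf c σ x := by
  simp only [ggdPdf, abs_mul, abs_abs]

theorem integral_ggdPdf_mul_exp_log_abs {c σ : ℝ} (hc : 0 < c) (hσ : 0 < σ) (τ : ℝ) :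
    ∫ x : ℝ, (ggdPdf c σ x : ℂ) * Complex.exp (-((τ * Real.log |x| : ℝ) : ℂ) * Complex.I) =
      (ggdBeta c σ : ℂ) ^ ((τ : ℂ) * Complex.I) *
        Complex.Gamma ((1 - τ * Complex.I) / c) / Real.Gamma (1 / c) := by
  set β := ggdBeta c σ with hβ_def
  have hβ : 0 < β := ggdBeta_pos hc hσ
  set F : ℝ → ℂ := fun x => (ggdPdf c σ x : ℂ) *
    Complex.exp (-((τ * Real.log |x| : ℝ) : ℂ) * Complex.I) with hF
  have hF_Ioi : ∫ t in Ioi 0, F t =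
      ggdA c σ * mellin (fun t : ℝ => (Real.exp (-(β * t) ^ c) : ℂ)) (1 - τ * Complex.I) := by
    rw [mellin, ← integral_const_mul]
    refine setIntegral_congr_fun measurableSet_Ioi fun t (ht : 0 < t) => ?_
    rw [sub_sub_cancel_left, Complex.ofReal_cpow_neg_mul_I ht, smul_eq_mul]
    simp only [hF, ggdPdf, ← hβ_def, abs_of_pos ht, abs_of_pos (mul_pos hβ ht)]
    push_cast
    ring
  calc ∫ x, F x = ∫ x, F |x| := by simp only [hF, ggdPdf_abs, abs_abs]
    _ = 2 * ggdA c σ * ((β : ℂ) ^ (-(1 - τ * Complex.I)) *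
          (c⁻¹ * Complex.Gamma ((1 - τ * Complex.I) / c))) := by
      rw [integral_comp_abs_eq_two_smul, hF_Ioi,
        mellin_comp_mul_left (fun u : ℝ => (Real.exp (-u ^ c) : ℂ)) _ hβ,
        mellin_exp_neg_rpow hc (by simp), Complex.real_smul, smul_eq_mul]
      push_cast
      ring
    _ = _ := by
      rw [neg_sub, sub_eq_add_neg, Complex.cpow_add _ _ (Complex.ofReal_ne_zero.mpr hβ.ne'),
        Complex.cpow_neg_one, ggdA, ← hβ_def]
      have hβ0 : (β : ℂ) ≠ 0 := Complex.ofReal_ne_zero.mpr hβ.ne'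
      have hc0 : (c : ℂ) ≠ 0 := Complex.ofReal_ne_zero.mpr hc.ne'
      push_cast
      field_simp

theorem norm_integral_ggdPdf_mul_exp_log_abs {c σ : ℝ} (hc : 0 < c) (hσ : 0 < σ) (τ : ℝ) :
    ‖∫ x : ℝ, (ggdPdf c σ x : ℂ) * Complex.exp (-((τ * Real.log |x| : ℝ) : ℂ) * Complex.I)‖ =
      ‖Complex.Gamma ((1 - τ * Complex.I) / c)‖ / Real.Gamma (1 / c) := by
  rw [integral_ggdPdf_mul_exp_log_abs hc hσ, norm_div, norm_mul,
    Complex.norm_cpow_eq_rpow_re_of_pos (ggdBeta_pos hc hσ), Complex.norm_real,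
    Real.norm_of_nonneg (Real.Gamma_pos_of_pos (one_div_pos.mpr hc)).le]
  simp

lemma bfCoeff_eq_integral (c σ : ℝ) (n : ℕ) :
    bfCoeff c σ n = ∫ x : ℝ, (ggdPdf c σ x : ℂ) *
      Complex.exp (-((2 * π * n / Real.log 10 * Real.log |x| : ℝ) : ℂ) * Complex.I) := by
  simp only [bfCoeff, Real.logb, mul_div_assoc', div_mul_eq_mul_div]

/-- Bounds on the modulus of the `n`-th Benford–Fourier coefficient:
`0 < |a_n| ≤ (1 + (2πn/ln 10)²)^{−1/2} < 1`. -/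
theorem bfCoeff_abs_bounds (c σ : ℝ) (hc : 0 < c) (hσ : 0 < σ) (n : ℕ) (hn : 0 < n) :
    0 < ‖bfCoeff c σ n‖ ∧
    ‖bfCoeff c σ n‖ ≤ Real.sqrt ((1 + (2 * π * n / Real.log 10) ^ 2)⁻¹) ∧
    Real.sqrt ((1 + (2 * π * n / Real.log 10) ^ 2)⁻¹) < 1 := by
  rw [bfCoeff_eq_integral, norm_integral_ggdPdf_mul_exp_log_abs hc hσ]
  set τ := 2 * π * n / Real.log 10
  have hτ : 0 < τ := by
    have := Real.log_pos (by norm_num : (1 : ℝ) < 10)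
    positivity
  have hs_re : 0 < ((1 - τ * Complex.I) / c).re := by
    rw [Complex.re_one_sub_mul_I_div]; positivity
  refine ⟨?_, Complex.norm_Gamma_one_sub_mul_I_div_le hc τ, ?_⟩
  · exact div_pos (norm_pos_iff.mpr (Complex.Gamma_ne_zero_of_re_pos hs_re))
      (Real.Gamma_pos_of_pos (one_div_pos.mpr hc))
  · rw [Real.sqrt_lt' one_pos, one_pow, inv_lt_one₀ (by positivity)]
    exact lt_add_of_pos_right 1 (pow_pos hτ 2)
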